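/- arXiv:2302.11291 — 8 statements merged into one kernel-verified Lean document; each statement's English description precedes it below -/
import Mathlib

section
/- Let (C, V) be an election with max-cardinality votes A = argmax_{v∈V} |v|, each of cardinality x, and suppose C' = ⋂_{v∈A} v is nonempty and C' ≠ C. Then for every a ∈ C' the MAV score of {a} is at most x, and for every b ∈ C \ C' the MAV score of {b} is at least x + 1. -/
namespace Stmt1

variable {α : Type*} [DecidableEq α]

/-- The MAV score of a committee `w`: the maximum Hamming distance to a vote in `V`. -/
def mavScore (V : Multiset (Finset α)) (w : Finset α) : ℕ :=
  (V.map (fun v => (w \ v).card + (v \ w).card)).sup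

/-- Let `A` be the submultiset of max-cardinality votes, each of cardinality `x`,
and suppose `C' = ⋂_{v ∈ A} v` is nonempty and different from `C`.  Then every
`a ∈ C'` has MAV score (as a singleton committee) at most `x`, and every
`b ∈ C \ C'` has MAV score at least `x + 1`. -/
theorem mav_singleton_score_bounds
    (C : Finset α) (V : Multiset (Finset α))
    (hC : C.Nonempty) (hV : V ≠ 0) (hVC : ∀ v ∈ V, v ⊆ C)
    (A : Multiset (Finset α)) (hA : A = V.filter (fun v => ∀ u ∈ V, u.card ≤ v.card))
    (x : ℕ) (hx : ∀ v ∈ A, v.card = x)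
    (C' : Finset α) (hC' : C' = C.filter (fun c => ∀ v ∈ A, c ∈ v))
    (hne : C'.Nonempty) (hCC : C' ≠ C) :
    (∀ a ∈ C', mavScore V {a} ≤ x) ∧
    (∀ b ∈ C \ C', x + 1 ≤ mavScore V {b}) := by
  subst hA hC'
  -- there is a max-cardinality vote
  obtain ⟨m, hmV, hm⟩ := V.toFinset.exists_max_image Finset.card
    (by rwa [Multiset.toFinset_nonempty])
  rw [Multiset.mem_toFinset] at hmV
  have hmA : m ∈ V.filter (fun v => ∀ u ∈ V, u.card ≤ v.card) := by
    rw [Multiset.mem_filter]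
    exact ⟨hmV, fun u hu => hm u (Multiset.mem_toFinset.mpr hu)⟩
  have hmx : m.card = x := hx m hmA
  have hub : ∀ u ∈ V, u.card ≤ x := by
    intro u hu
    rw [← hmx]; exact hm u (Multiset.mem_toFinset.mpr hu)
  constructor
  · intro a ha
    rw [Finset.mem_filter] at ha
    apply Multiset.sup_le.mpr
    intro n hn
    obtain ⟨v, hvV, rfl⟩ := Multiset.mem_map.mp hn
    by_cases hav : a ∈ v
    · have h1 : ({a} : Finset α) \ v = ∅ := by
        rw [Finset.sdiff_eq_empty_iff_subset, Finset.singleton_subset_iff]; exact hav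
      have h2 : (v \ {a}).card = v.card - 1 := by
        rw [Finset.card_sdiff_of_subset (by simpa using hav), Finset.card_singleton]
      have := hub v hvV
      simp only [h1, h2, Finset.card_empty]
      omega
    · have hvA : v ∉ V.filter (fun v => ∀ u ∈ V, u.card ≤ v.card) := by
        intro h
        exact hav (ha.2 v h)
      have hlt : v.card < x := by
        rw [Multiset.mem_filter] at hvA
        push_neg at hvA
        obtain ⟨u, hu, hcu⟩ := hvA hvV
        exact lt_of_lt_of_le hcu (hub u hu)
      have h1 : ({a} : Finset α) \ v = {a} := by
        rw [Finset.sdiff_eq_self_iff_disjoint]; simpa using hav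
      have h2 : v \ {a} = v := by
        rw [Finset.sdiff_eq_self_iff_disjoint]; simpa using fun h => (hav h).elim
      simp only [h1, h2, Finset.card_singleton]
      omega
  · intro b hb
    rw [Finset.mem_sdiff, Finset.mem_filter] at hb
    obtain ⟨hbC, hb2⟩ := hb
    push_neg at hb2
    obtain ⟨v, hvA, hbv⟩ := hb2 hbC
    have hvV : v ∈ V := (Multiset.mem_filter.mp hvA).1
    have hvx : v.card = x := hx v hvA
    have h1 : ({b} : Finset α) \ v = {b} := by
      rw [Finset.sdiff_eq_self_iff_disjoint]; simpa using hbv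
    have h2 : v \ {b} = v := by
      rw [Finset.sdiff_eq_self_iff_disjoint]; simpa using fun h => (hbv h).elim
    have hmem : (({b} : Finset α) \ v).card + (v \ {b}).card ∈
        V.map (fun v => (({b} : Finset α) \ v).card + (v \ {b}).card) :=
      Multiset.mem_map_of_mem _ hvV
    have := Multiset.le_sup hmem
    rw [h1, h2, Finset.card_singleton, hvx] at this
    unfold mavScore
    omega


end Stmt1
end

section
/- Every ω-Thiele rule satisfies Negated Revealed Preference (NRP): if a k-committee w is not the unique ω-Thiele winning k-committee of the election restricted to a candidate set B ⊇ w, then w is not the unique ω-Thiele winning k-committee of the election restricted to any candidate set B' with B ⊆ B'. -/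
namespace Stmt3

variable {α : Type*} [DecidableEq α]

/-- The `ω`-Thiele score of a committee `w` in the election with votes `V`. -/
def thieleScore (ω : ℕ → ℝ) (V : Multiset (Finset α)) (w : Finset α) : ℝ :=
  (V.map (fun v => ω (v ∩ w).card)).sum

/-- `w` is an `ω`-Thiele winning `k`-committee of the election restricted to
candidate set `B` (each vote `v` is replaced by `v ∩ B`). -/
def thieleWins (ω : ℕ → ℝ) (B : Finset α) (V : Multiset (Finset α)) (k : ℕ)
    (w : Finset α) : Prop :=
  w ⊆ B ∧ w.card = k ∧ ∀ w' ⊆ B, w'.card = k →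
    thieleScore ω (V.map (fun v => v ∩ B)) w' ≤ thieleScore ω (V.map (fun v => v ∩ B)) w

/-- `w` is the unique `ω`-Thiele winning `k`-committee of the restriction to `B`. -/
def thieleUnique (ω : ℕ → ℝ) (B : Finset α) (V : Multiset (Finset α)) (k : ℕ)
    (w : Finset α) : Prop :=
  thieleWins ω B V k w ∧ ∀ w', thieleWins ω B V k w' → w' = w

/-- Every `ω`-Thiele rule satisfies Negated Revealed Preference: if a `k`-committee
`w` is not the unique winning `k`-committee of the election restricted to `B ⊇ w`,
then it is not the unique winning `k`-committee of the restriction to any `B' ⊇ B`. -/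
theorem thiele_satisfies_NRP
    (ω : ℕ → ℝ) (hω0 : ω 0 = 0) (hmono : Monotone ω)
    (V : Multiset (Finset α)) (k : ℕ) (w B B' : Finset α)
    (hwB : w ⊆ B) (hBB' : B ⊆ B') (hwk : w.card = k)
    (h : ¬ thieleUnique ω B V k w) :
    ¬ thieleUnique ω B' V k w := by
  -- score of a committee inside the candidate set is unaffected by restriction
  have key : ∀ (C u : Finset α), u ⊆ C →
      thieleScore ω (V.map (fun v => v ∩ C)) u = thieleScore ω V u := by
    intro C u hu
    simp only [thieleScore, Multiset.map_map, Function.comp]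
    congr 1
    apply Multiset.map_congr rfl
    intro v _
    rw [Finset.inter_assoc, Finset.inter_eq_right.mpr hu]
  intro hU'
  apply h
  obtain ⟨⟨_, _, hwin'⟩, huniq'⟩ := hU'
  constructor
  · refine ⟨hwB, hwk, fun w' hw' hk' => ?_⟩
    rw [key B w' hw', key B w hwB, ← key B' w' (hw'.trans hBB'),
      ← key B' w (hwB.trans hBB')]
    exact hwin' w' (hw'.trans hBB') hk'
  · rintro w' ⟨hw'B, hw'k, hwin⟩
    apply huniq'
    refine ⟨hw'B.trans hBB', hw'k, fun w'' hw'' hk'' => ?_⟩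
    calc thieleScore ω (V.map (fun v => v ∩ B')) w''
        ≤ thieleScore ω (V.map (fun v => v ∩ B')) w := hwin' w'' hw'' hk''
      _ = thieleScore ω (V.map (fun v => v ∩ B)) w := by
          rw [key B' w (hwB.trans hBB'), key B w hwB]
      _ ≤ thieleScore ω (V.map (fun v => v ∩ B)) w' := hwin w hwB hwk
      _ = thieleScore ω (V.map (fun v => v ∩ B')) w' := by
          rw [key B w' hw'B, key B' w' (hw'B.trans hBB')]

end Stmt3
end

section
/- Let φ ∈ {ABCCV, PAV, MAV} and let (C, V) be an election, k ≤ |C|, and J ⊆ C. For V' ⊆ V let C*(V') = {c ∈ C : V(c) = V'} be the set of candidates approved exactly by the votes in V'. Then there exists an optimal (i.e., winning) k-committee w with J \ w ≠ ∅ if and only if there exist an optimal k-committee w' and a submultiset V' ⊆ V such that J ∩ C*(V') ≠ ∅ and |w' ∩ C*(V')| < |C*(V')|. -/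
namespace Stmt8

variable {α : Type*} [DecidableEq α]

/-- The ABCCV score of a committee `w`. -/
def abccvScore (V : Multiset (Finset α)) (w : Finset α) : ℕ :=
  (V.filter (fun v => (v ∩ w).Nonempty)).card

/-- Harmonic numbers: `pavH n = Σ_{j=1}^n 1/j`. -/
def pavH (n : ℕ) : ℚ := ∑ i ∈ Finset.range n, (1 : ℚ) / (i + 1)

/-- The PAV score of a committee `w`. -/
def pavScore (V : Multiset (Finset α)) (w : Finset α) : ℚ :=
  (V.map (fun v => pavH (v ∩ w).card)).sum

/-- The MAV score of a committee `w`. -/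
def mavScore (V : Multiset (Finset α)) (w : Finset α) : ℕ :=
  (V.map (fun v => (w \ v).card + (v \ w).card)).sup

/-- `w` is an optimal (winning) `k`-committee for ABCCV (maximizing the score). -/
def abccvOpt (C : Finset α) (V : Multiset (Finset α)) (k : ℕ) (w : Finset α) : Prop :=
  w ⊆ C ∧ w.card = k ∧ ∀ w' ⊆ C, w'.card = k → abccvScore V w' ≤ abccvScore V w

/-- `w` is an optimal (winning) `k`-committee for PAV (maximizing the score). -/
def pavOpt (C : Finset α) (V : Multiset (Finset α)) (k : ℕ) (w : Finset α) : Prop :=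
  w ⊆ C ∧ w.card = k ∧ ∀ w' ⊆ C, w'.card = k → pavScore V w' ≤ pavScore V w

/-- `w` is an optimal (winning) `k`-committee for MAV (minimizing the score). -/
def mavOpt (C : Finset α) (V : Multiset (Finset α)) (k : ℕ) (w : Finset α) : Prop :=
  w ⊆ C ∧ w.card = k ∧ ∀ w' ⊆ C, w'.card = k → mavScore V w ≤ mavScore V w'

/-- `C*(V')`: the candidates of `C` approved exactly by the votes in `V'`. -/
def cstar (C : Finset α) (V V' : Multiset (Finset α)) : Finset α :=
  C.filter (fun c => V.filter (fun v => c ∈ v) = V')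

lemma inter_swap_card {c d : α} {w v : Finset α} (hc : c ∈ w) (hd : d ∉ w)
    (hiff : c ∈ v ↔ d ∈ v) : (v ∩ insert d (w.erase c)).card = (v ∩ w).card := by
  by_cases hcv : c ∈ v
  · have hdv : d ∈ v := hiff.mp hcv
    have h1 : v ∩ insert d (w.erase c) = insert d ((v ∩ w).erase c) := by
      rw [Finset.inter_insert_of_mem hdv, Finset.inter_erase]
    have hdmem : d ∉ (v ∩ w).erase c := fun h =>
      hd (Finset.mem_inter.mp (Finset.mem_of_mem_erase h)).2
    have hcm : c ∈ v ∩ w := Finset.mem_inter.mpr ⟨hcv, hc⟩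
    rw [h1, Finset.card_insert_of_notMem hdmem, Finset.card_erase_of_mem hcm]
    have : 0 < (v ∩ w).card := Finset.card_pos.mpr ⟨c, hcm⟩
    omega
  · have hdv : d ∉ v := fun h => hcv (hiff.mpr h)
    have h1 : v ∩ insert d (w.erase c) = v ∩ w := by
      rw [Finset.inter_insert_of_notMem hdv, Finset.inter_erase,
        Finset.erase_eq_of_notMem (fun h => hcv (Finset.mem_inter.mp h).1)]
    rw [h1]

lemma swap_mem_iff {C : Finset α} {V V' : Multiset (Finset α)} {c d : α}
    (hc : c ∈ cstar C V V') (hd : d ∈ cstar C V V') :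
    ∀ v ∈ V, (c ∈ v ↔ d ∈ v) := by
  intro v hv
  have hc' := (Finset.mem_filter.mp hc).2
  have hd' := (Finset.mem_filter.mp hd).2
  constructor
  · intro h
    have : v ∈ Multiset.filter (fun v => c ∈ v) V := Multiset.mem_filter.mpr ⟨hv, h⟩
    rw [hc', ← hd'] at this
    exact (Multiset.mem_filter.mp this).2
  · intro h
    have : v ∈ Multiset.filter (fun v => d ∈ v) V := Multiset.mem_filter.mpr ⟨hv, h⟩
    rw [hd', ← hc'] at this
    exact (Multiset.mem_filter.mp this).2

lemma swap_card {c d : α} {w : Finset α} (hc : c ∈ w) (hd : d ∉ w) :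
    (insert d (w.erase c)).card = w.card := by
  have hdm : d ∉ w.erase c := fun h => hd (Finset.mem_of_mem_erase h)
  rw [Finset.card_insert_of_notMem hdm, Finset.card_erase_of_mem hc]
  have : 0 < w.card := Finset.card_pos.mpr ⟨c, hc⟩
  omega

lemma abccv_swap {V : Multiset (Finset α)} {c d : α} {w : Finset α}
    (hc : c ∈ w) (hd : d ∉ w) (hiff : ∀ v ∈ V, (c ∈ v ↔ d ∈ v)) :
    abccvScore V (insert d (w.erase c)) = abccvScore V w := by
  unfold abccvScore
  congr 1
  apply Multiset.filter_congr
  intro v hv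
  rw [← Finset.card_pos, ← Finset.card_pos, inter_swap_card hc hd (hiff v hv)]

lemma pav_swap {V : Multiset (Finset α)} {c d : α} {w : Finset α}
    (hc : c ∈ w) (hd : d ∉ w) (hiff : ∀ v ∈ V, (c ∈ v ↔ d ∈ v)) :
    pavScore V (insert d (w.erase c)) = pavScore V w := by
  unfold pavScore
  congr 1
  apply Multiset.map_congr rfl
  intro v hv
  rw [inter_swap_card hc hd (hiff v hv)]

lemma mav_swap {V : Multiset (Finset α)} {c d : α} {w : Finset α}
    (hc : c ∈ w) (hd : d ∉ w) (hiff : ∀ v ∈ V, (c ∈ v ↔ d ∈ v)) :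
    mavScore V (insert d (w.erase c)) = mavScore V w := by
  unfold mavScore
  congr 1
  apply Multiset.map_congr rfl
  intro v hv
  set w' := insert d (w.erase c) with hw'
  have h1 : (w' \ v).card + (w' ∩ v).card = w'.card := Finset.card_sdiff_add_card_inter w' v
  have h2 : (w \ v).card + (w ∩ v).card = w.card := Finset.card_sdiff_add_card_inter w v
  have h3 : (v \ w').card + (v ∩ w').card = v.card := Finset.card_sdiff_add_card_inter v w'
  have h4 : (v \ w).card + (v ∩ w).card = v.card := Finset.card_sdiff_add_card_inter v w
  have h5 : (v ∩ w').card = (v ∩ w).card := inter_swap_card hc hd (hiff v hv)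
  have h6 : w'.card = w.card := swap_card hc hd
  rw [Finset.inter_comm w' v] at h1
  rw [Finset.inter_comm w v] at h2
  omega

/-- Abstract version of the characterization for any optimality notion invariant
under swapping candidates with identical approver sets. -/
lemma abstract_char {C : Finset α} {V : Multiset (Finset α)} {J : Finset α}
    (hJ : J ⊆ C) (Opt : Finset α → Prop)
    (hswap : ∀ w c d, Opt w → c ∈ w → d ∈ C → d ∉ w →
      (∀ v ∈ V, (c ∈ v ↔ d ∈ v)) → Opt (insert d (w.erase c))) :
    (∃ w, Opt w ∧ (J \ w).Nonempty) ↔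
      ∃ w' V', V' ≤ V ∧ Opt w' ∧ (J ∩ cstar C V V').Nonempty ∧
        (w' ∩ cstar C V V').card < (cstar C V V').card := by
  constructor
  · rintro ⟨w, hw, c, hcJw⟩
    obtain ⟨hcJ, hcw⟩ := Finset.mem_sdiff.mp hcJw
    refine ⟨w, V.filter (fun v => c ∈ v), Multiset.filter_le _ _, hw, ?_, ?_⟩
    · exact ⟨c, Finset.mem_inter.mpr ⟨hcJ, Finset.mem_filter.mpr ⟨hJ hcJ, rfl⟩⟩⟩
    · apply Finset.card_lt_card
      rw [Finset.ssubset_iff_of_subset Finset.inter_subset_right]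
      exact ⟨c, Finset.mem_filter.mpr ⟨hJ hcJ, rfl⟩,
        fun h => hcw (Finset.mem_inter.mp h).1⟩
  · rintro ⟨w', V', _, hw', ⟨c, hcJ⟩, hcard⟩
    obtain ⟨hcJ', hcS⟩ := Finset.mem_inter.mp hcJ
    by_cases hcw : c ∈ w'
    · have : ¬ cstar C V V' ⊆ w' ∩ cstar C V V' :=
        fun h => absurd (Finset.card_le_card h) (by omega)
      obtain ⟨d, hdS, hdw⟩ := Finset.not_subset.mp this
      have hdw' : d ∉ w' := fun h => hdw (Finset.mem_inter.mpr ⟨h, hdS⟩)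
      have hdC : d ∈ C := (Finset.mem_filter.mp hdS).1
      have hiff := swap_mem_iff hcS hdS
      refine ⟨insert d (w'.erase c), hswap w' c d hw' hcw hdC hdw' hiff, c, ?_⟩
      rw [Finset.mem_sdiff]
      refine ⟨hcJ', fun h => ?_⟩
      rcases Finset.mem_insert.mp h with h | h
      · exact hdw' (h ▸ hcw)
      · exact (Finset.notMem_erase c w') h
    · exact ⟨w', hw', c, Finset.mem_sdiff.mpr ⟨hcJ', hcw⟩⟩

/-- For `φ ∈ {ABCCV, PAV, MAV}`: there is an optimal `k`-committee `w` with
`J \ w ≠ ∅` iff there are an optimal `k`-committee `w'` and a submultiset `V' ⊆ V`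
with `J ∩ C*(V') ≠ ∅` and `|w' ∩ C*(V')| < |C*(V')|`. -/
theorem optimal_committee_excluding_J_characterization
    (C : Finset α) (V : Multiset (Finset α)) (k : ℕ) (J : Finset α)
    (hVC : ∀ v ∈ V, v ⊆ C) (hk : k ≤ C.card) (hJ : J ⊆ C) :
    ((∃ w, abccvOpt C V k w ∧ (J \ w).Nonempty) ↔
      ∃ w' V', V' ≤ V ∧ abccvOpt C V k w' ∧ (J ∩ cstar C V V').Nonempty ∧
        (w' ∩ cstar C V V').card < (cstar C V V').card) ∧
    ((∃ w, pavOpt C V k w ∧ (J \ w).Nonempty) ↔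
      ∃ w' V', V' ≤ V ∧ pavOpt C V k w' ∧ (J ∩ cstar C V V').Nonempty ∧
        (w' ∩ cstar C V V').card < (cstar C V V').card) ∧
    ((∃ w, mavOpt C V k w ∧ (J \ w).Nonempty) ↔
      ∃ w' V', V' ≤ V ∧ mavOpt C V k w' ∧ (J ∩ cstar C V V').Nonempty ∧
        (w' ∩ cstar C V V').card < (cstar C V V').card) := by
  refine ⟨?_, ?_, ?_⟩
  · apply abstract_char hJ
    rintro w c d ⟨hwC, hwk, hopt⟩ hc hdC hd hiff
    refine ⟨?_, ?_, ?_⟩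
    · intro x hx
      rcases Finset.mem_insert.mp hx with h | h
      · exact h ▸ hdC
      · exact hwC (Finset.mem_of_mem_erase h)
    · rw [swap_card hc hd]; exact hwk
    · intro w'' hw'' hk''
      rw [abccv_swap hc hd hiff]
      exact hopt w'' hw'' hk''
  · apply abstract_char hJ
    rintro w c d ⟨hwC, hwk, hopt⟩ hc hdC hd hiff
    refine ⟨?_, ?_, ?_⟩
    · intro x hx
      rcases Finset.mem_insert.mp hx with h | h
      · exact h ▸ hdC
      · exact hwC (Finset.mem_of_mem_erase h)
    · rw [swap_card hc hd]; exact hwk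
    · intro w'' hw'' hk''
      rw [pav_swap hc hd hiff]
      exact hopt w'' hw'' hk''
  · apply abstract_char hJ
    rintro w c d ⟨hwC, hwk, hopt⟩ hc hdC hd hiff
    refine ⟨?_, ?_, ?_⟩
    · intro x hx
      rcases Finset.mem_insert.mp hx with h | h
      · exact h ▸ hdC
      · exact hwC (Finset.mem_of_mem_erase h)
    · rw [swap_card hc hd]; exact hwk
    · intro w'' hw'' hk''
      rw [mav_swap hc hd hiff]
      exact hopt w'' hw'' hk''

end Stmt8
end

section
/- Approval voting is immune to constructive control by adding candidates: the AV score of every registered candidate is unchanged when new candidates are added to the election, so a candidate not contained in some AV winning k-committee of (C, V) cannot be made to belong to all AV winning k-committees of (C ∪ D', V) for any set D' of added candidates. -/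
namespace Stmt10

variable {α : Type*} [DecidableEq α]

/-- The AV score of a candidate `c` in the election with candidate set `C`
(each vote is intersected with the current candidate set). -/
def avScoreIn (C : Finset α) (V : Multiset (Finset α)) (c : α) : ℕ :=
  (V.filter (fun v => c ∈ v ∩ C)).card

/-- The AV score of a committee `w` in the election with candidate set `C`. -/
def avComScoreIn (C : Finset α) (V : Multiset (Finset α)) (w : Finset α) : ℕ :=
  ∑ c ∈ w, avScoreIn C V c

/-- `w` is an AV winning `k`-committee of the election with candidate set `C`. -/
def avWins (C : Finset α) (V : Multiset (Finset α)) (k : ℕ) (w : Finset α) : Prop :=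
  w ⊆ C ∧ w.card = k ∧ ∀ w' ⊆ C, w'.card = k →
    avComScoreIn C V w' ≤ avComScoreIn C V w

/-- AV is immune to constructive control by adding candidates: the AV score of
every registered candidate is unchanged when the candidates `D'` are added, and a
candidate `c ∈ C` not contained in some AV winning `k`-committee of `(C, V)` is
still not contained in some AV winning `k`-committee of `(C ∪ D', V)`. -/
theorem av_immune_ccac
    (C D' : Finset α) (V : Multiset (Finset α)) (k : ℕ)
    (hk1 : 1 ≤ k) (hk : k ≤ C.card) (hdisj : Disjoint C D') :
    (∀ c ∈ C, avScoreIn C V c = avScoreIn (C ∪ D') V c) ∧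
    (∀ c ∈ C, (∃ w, avWins C V k w ∧ c ∉ w) →
      ∃ w, avWins (C ∪ D') V k w ∧ c ∉ w) := by
  have hscore : ∀ c ∈ C, avScoreIn C V c = avScoreIn (C ∪ D') V c := by
    intro c hc
    unfold avScoreIn
    congr 1
    apply Multiset.filter_congr
    intro v _
    simp [Finset.mem_inter, Finset.mem_union, hc]
  refine ⟨hscore, ?_⟩
  rintro c hc ⟨w, hw, hcw⟩
  -- a winner exists in the enlarged election
  have hkle : k ≤ (C ∪ D').card :=
    le_trans hk (Finset.card_le_card Finset.subset_union_left)
  obtain ⟨w'', hw''mem, hw''max⟩ := Finset.exists_max_image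
    ((C ∪ D').powersetCard k) (avComScoreIn (C ∪ D') V)
    (Finset.powersetCard_nonempty.mpr hkle)
  rw [Finset.mem_powersetCard] at hw''mem
  obtain ⟨hsub, hcard⟩ := hw''mem
  have hmax : ∀ w' ⊆ C ∪ D', w'.card = k →
      avComScoreIn (C ∪ D') V w' ≤ avComScoreIn (C ∪ D') V w'' := by
    intro w' h1 h2; exact hw''max w' (Finset.mem_powersetCard.mpr ⟨h1, h2⟩)
  by_cases hcw'' : c ∈ w''
  · -- swap `c` out for some `d ∈ w \ w''`
    have hne : (w \ w'').Nonempty := by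
      rw [Finset.sdiff_nonempty]
      intro hss
      have : w = w'' := Finset.eq_of_subset_of_card_le hss (by rw [hw.2.1, hcard])
      exact hcw (this ▸ hcw'')
    obtain ⟨d, hd⟩ := hne
    rw [Finset.mem_sdiff] at hd
    obtain ⟨hdw, hdw''⟩ := hd
    have hdC : d ∈ C := hw.1 hdw
    -- in the original election, score c ≤ score d
    have key : avScoreIn C V c ≤ avScoreIn C V d := by
      have h2 : w.erase d ⊆ C := (Finset.erase_subset _ _).trans hw.1
      have hcne : c ∉ w.erase d := fun h => hcw (Finset.mem_of_mem_erase h)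
      have hcardins : (insert c (w.erase d)).card = k := by
        rw [Finset.card_insert_of_notMem hcne, Finset.card_erase_of_mem hdw, hw.2.1]
        omega
      have hle := hw.2.2 (insert c (w.erase d)) (Finset.insert_subset hc h2) hcardins
      rw [avComScoreIn, avComScoreIn, Finset.sum_insert hcne,
        ← Finset.sum_erase_add w _ hdw] at hle
      omega
    have hcC : c ∈ C := hc
    have hdne : d ∉ w''.erase c := fun h => hdw'' (Finset.mem_of_mem_erase h)
    refine ⟨insert d (w''.erase c), ⟨?_, ?_, ?_⟩, ?_⟩
    · exact Finset.insert_subset (Finset.mem_union_left _ hdC)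
        ((Finset.erase_subset _ _).trans hsub)
    · rw [Finset.card_insert_of_notMem hdne, Finset.card_erase_of_mem hcw'', hcard]
      omega
    · intro w' h1 h2
      refine le_trans (hmax w' h1 h2) ?_
      rw [avComScoreIn, avComScoreIn, Finset.sum_insert hdne,
        ← Finset.sum_erase_add w'' _ hcw'']
      have e1 : avScoreIn (C ∪ D') V c = avScoreIn C V c := (hscore c hcC).symm
      have e2 : avScoreIn (C ∪ D') V d = avScoreIn C V d := (hscore d hdC).symm
      omega
    · intro h
      rcases Finset.mem_insert.mp h with h | h
      · exact hcw (h ▸ hdw)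
      · exact (Finset.notMem_erase c w'') h
  · exact ⟨w'', ⟨hsub, hcard, hmax⟩, hcw''⟩

end Stmt10
end

section
/- Let ω be nondecreasing with ω(0) = 0 and ω(2) < 2ω(1), and let G = (N, E) be a t-regular graph with |N| ≥ k ≥ 1. Construct the election with candidate set C = N ∪ {p}, one vote {u, u'} for each edge {u, u'} ∈ E, and t votes {p}. Then there exists an ω-Thiele winning k-committee not containing p if and only if G has an independent set of size k. Consequently, p belongs to all ω-Thiele winning k-committees if and only if G has no independent set of size k. -/
/-!
Since `ω 0 = 0`, the vote of an edge `e` scores `ω(1)·|e ∩ w|`, less the defect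
`δ = 2ω(1) - ω(2) > 0` when both ends of `e` are elected, and the `t` votes `{p}` score `t·ω(1)`
exactly when `p` is elected. Double counting in the `t`-regular graph then gives
`score(w) = t·k·ω(1) - δ·#(edges inside w)` for every `k`-committee `w`, so the winners are the
`k`-committees spanning the fewest edges. An independent `k`-set spans none; conversely, a winner
avoiding `p` spans no edge, since trading a vertex of an edge inside it for `p` would remove that
edge and keep the size.
-/

namespace Stmt11

variable {α : Type*} [DecidableEq α]

/-- The `ω`-Thiele score of a committee `w`. -/
def thieleScore (ω : ℕ → ℝ) (V : Multiset (Finset (Option α))) (w : Finset (Option α)) : ℝ :=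
  (V.map (fun v => ω (v ∩ w).card)).sum

/-- `w` is an `ω`-Thiele winning `k`-committee of the election `(C, V)`. -/
def thieleWins (ω : ℕ → ℝ) (C : Finset (Option α)) (V : Multiset (Finset (Option α)))
    (k : ℕ) (w : Finset (Option α)) : Prop :=
  w ⊆ C ∧ w.card = k ∧ ∀ w' ⊆ C, w'.card = k → thieleScore ω V w' ≤ thieleScore ω V w

open Finset

lemma apply_eq_mul_of_le_one {ω : ℕ → ℝ} (hω0 : ω 0 = 0) {c : ℕ} (hc : c ≤ 1) :
    ω c = c * ω 1 := by
  interval_cases c <;> simp [hω0]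

lemma apply_card_inter_of_card_eq_two {ω : ℕ → ℝ} (hω0 : ω 0 = 0) {e : Finset α} (he : #e = 2)
    (S : Finset α) :
    ω #(S ∩ e) = #(S ∩ e) * ω 1 - (2 * ω 1 - ω 2) * if e ⊆ S then 1 else 0 := by
  by_cases heS : e ⊆ S
  · rw [inter_eq_right.mpr heS, he, if_pos heS]
    push_cast
    ring
  · have hlt : #(S ∩ e) < #e :=
      card_lt_card (ssubset_of_subset_of_ne inter_subset_right (mt inter_eq_right.mp heS))
    rw [apply_eq_mul_of_le_one hω0 (by omega), if_neg heS]
    ring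

lemma card_filter_subset_erase_lt {E : Finset (Finset α)} {S e : Finset α} (he : e ∈ E)
    (heS : e ⊆ S) {x : α} (hx : x ∈ e) :
    #{f ∈ E | f ⊆ S.erase x} < #{f ∈ E | f ⊆ S} := by
  refine card_lt_card ((ssubset_iff_of_subset ?_).mpr ⟨e, mem_filter.mpr ⟨he, heS⟩, ?_⟩)
  · exact monotone_filter_right E fun _ _ hf => hf.trans (erase_subset x S)
  · simp only [mem_filter, not_and]
    exact fun _ h => notMem_erase x S (h hx)

lemma card_image_some_inter (e : Finset α) (w : Finset (Option α)) :
    #(e.image some ∩ w) = #(eraseNone w ∩ e) := by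
  rw [← card_image_of_injective _ (Option.some_injective α)]
  congr 1
  ext (_ | u) <;> simp [and_comm]

lemma card_eraseNone_add_card_inter_none (w : Finset (Option α)) :
    #(eraseNone w) + #({none} ∩ w) = #w := by
  by_cases h : none ∈ w
  · rw [card_eraseNone_of_mem h, singleton_inter_of_mem h, card_singleton]
    have := card_pos.mpr ⟨none, h⟩
    omega
  · rw [card_eraseNone_of_not_mem h, singleton_inter_of_notMem h, card_empty, add_zero]

lemma eraseNone_subset_of_subset_insert_none {N : Finset α} {w : Finset (Option α)}
    (hw : w ⊆ insert none (N.image some)) : eraseNone w ⊆ N := by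
  intro u hu
  simpa using hw (mem_eraseNone.mp hu)

def graphVotes (E : Finset (Finset α)) (t : ℕ) : Multiset (Finset (Option α)) :=
  E.val.map (fun e => e.image some) + Multiset.replicate t {none}

lemma thieleScore_graphVotes {ω : ℕ → ℝ} (hω0 : ω 0 = 0) {E : Finset (Finset α)} {t : ℕ}
    (hE2 : ∀ e ∈ E, #e = 2) {w : Finset (Option α)}
    (hreg : ∀ u ∈ eraseNone w, #{e ∈ E | u ∈ e} = t) :
    thieleScore ω (graphVotes E t) w =
      t * #w * ω 1 - (2 * ω 1 - ω 2) * #{e ∈ E | e ⊆ eraseNone w} := by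
  set S := eraseNone w
  have hedges : ∑ e ∈ E, ω #(e.image some ∩ w) =
      t * #S * ω 1 - (2 * ω 1 - ω 2) * #{e ∈ E | e ⊆ S} := by
    simp_rw [card_image_some_inter]
    rw [sum_congr rfl fun e he => apply_card_inter_of_card_eq_two hω0 (hE2 e he) S,
      sum_sub_distrib, ← sum_mul, ← mul_sum, sum_boole, ← Nat.cast_sum, sum_card_inter hreg]
    push_cast
    ring
  have hnone : ω #({none} ∩ w) = #({none} ∩ w) * ω 1 :=
    apply_eq_mul_of_le_one hω0 ((card_le_card inter_subset_left).trans (card_singleton _).le)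
  rw [thieleScore, graphVotes, Multiset.map_add, Multiset.sum_add, Multiset.map_map,
    Multiset.map_replicate, Multiset.sum_replicate, nsmul_eq_mul]
  change ∑ e ∈ E, ω #(e.image some ∩ w) + _ = _
  rw [hedges, hnone, ← card_eraseNone_add_card_inter_none w]
  push_cast
  ring

lemma thieleWins_graphVotes_iff {ω : ℕ → ℝ} (hω0 : ω 0 = 0) (hω2 : ω 2 < 2 * ω 1)
    {N : Finset α} {E : Finset (Finset α)} {t : ℕ} (hE2 : ∀ e ∈ E, #e = 2)
    (hreg : ∀ u ∈ N, #{e ∈ E | u ∈ e} = t) {k : ℕ} {w : Finset (Option α)} :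
    thieleWins ω (insert none (N.image some)) (graphVotes E t) k w ↔
      w ⊆ insert none (N.image some) ∧ #w = k ∧ ∀ w' ⊆ insert none (N.image some), #w' = k →
        #{e ∈ E | e ⊆ eraseNone w} ≤ #{e ∈ E | e ⊆ eraseNone w'} := by
  have hscore {w : Finset (Option α)} (hw : w ⊆ insert none (N.image some)) :=
    thieleScore_graphVotes hω0 hE2 fun u hu =>
      hreg u (eraseNone_subset_of_subset_insert_none hw hu)
  refine and_congr_right fun hw => and_congr_right fun hk => forall₂_congr fun w' hw' =>
    imp_congr_right fun hk' => ?_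
  rw [hscore hw, hscore hw', hk, hk', sub_le_sub_iff_left,
    mul_le_mul_iff_of_pos_left (by linarith), Nat.cast_le]

lemma independent_of_thieleWins_graphVotes {ω : ℕ → ℝ} (hω0 : ω 0 = 0) (hω2 : ω 2 < 2 * ω 1)
    {N : Finset α} {E : Finset (Finset α)} {t : ℕ} (hE2 : ∀ e ∈ E, #e = 2)
    (hreg : ∀ u ∈ N, #{e ∈ E | u ∈ e} = t) {k : ℕ} {w : Finset (Option α)}
    (hw : thieleWins ω (insert none (N.image some)) (graphVotes E t) k w) (hnone : none ∉ w) :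
    ∀ e ∈ E, ¬ e ⊆ eraseNone w := by
  obtain ⟨hwC, hwk, hmin⟩ := (thieleWins_graphVotes_iff hω0 hω2 hE2 hreg).mp hw
  intro e he heS
  obtain ⟨x, hx⟩ : e.Nonempty := card_pos.mp (by rw [hE2 e he]; norm_num)
  have hxw : some x ∈ w := mem_eraseNone.mp (heS hx)
  have hswap := hmin (insert none (w.erase (some x)))
    (insert_subset (mem_insert_self _ _) ((erase_subset _ _).trans hwC))
    (by rw [card_insert_of_notMem (fun h => hnone (mem_of_mem_erase h)), card_erase_of_mem hxw,
      Nat.sub_add_cancel (card_pos.mpr ⟨_, hxw⟩), hwk])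
  have herase : eraseNone (insert none (w.erase (some x))) = (eraseNone w).erase x := by
    ext u
    simp
  rw [herase] at hswap
  exact (card_filter_subset_erase_lt he heS hx).not_ge hswap

lemma thieleWins_image_some_of_independent {ω : ℕ → ℝ} (hω0 : ω 0 = 0) (hω2 : ω 2 < 2 * ω 1)
    {N : Finset α} {E : Finset (Finset α)} {t : ℕ} (hE2 : ∀ e ∈ E, #e = 2)
    (hreg : ∀ u ∈ N, #{e ∈ E | u ∈ e} = t) {S : Finset α} (hSN : S ⊆ N)
    (hS : ∀ e ∈ E, ¬ e ⊆ S) :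
    thieleWins ω (insert none (N.image some)) (graphVotes E t) #S (S.image some) := by
  refine (thieleWins_graphVotes_iff hω0 hω2 hE2 hreg).mpr
    ⟨(image_subset_image hSN).trans (subset_insert _ _),
      card_image_of_injective _ (Option.some_injective α), fun w' _ _ => ?_⟩
  rw [eraseNone_image_some, filter_false_of_mem hS, card_empty]
  exact Nat.zero_le _

theorem thiele_winner_vs_independent_set_general
    (N : Finset α) (E : Finset (Finset α)) (t k : ℕ)
    (hE2 : ∀ e ∈ E, e.card = 2)
    (hreg : ∀ u ∈ N, (E.filter (fun e => u ∈ e)).card = t)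
    (ω : ℕ → ℝ) (hω0 : ω 0 = 0) (hω2 : ω 2 < 2 * ω 1)
    (C : Finset (Option α)) (hC : C = insert none (N.image some))
    (V : Multiset (Finset (Option α)))
    (hV : V = E.val.map (fun e => e.image some) +
      Multiset.replicate t ({none} : Finset (Option α))) :
    ((∃ w, thieleWins ω C V k w ∧ none ∉ w) ↔
      ∃ S ⊆ N, S.card = k ∧ ∀ e ∈ E, ¬ e ⊆ S) ∧
    ((∀ w, thieleWins ω C V k w → none ∈ w) ↔
      ¬ ∃ S ⊆ N, S.card = k ∧ ∀ e ∈ E, ¬ e ⊆ S) := by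
  obtain rfl := hC
  obtain rfl : V = graphVotes E t := hV
  have hiff : (∃ w, thieleWins ω (insert none (N.image some)) (graphVotes E t) k w ∧ none ∉ w) ↔
      ∃ S ⊆ N, #S = k ∧ ∀ e ∈ E, ¬ e ⊆ S := by
    constructor
    · rintro ⟨w, hw, hnone⟩
      exact ⟨eraseNone w, eraseNone_subset_of_subset_insert_none hw.1,
        (card_eraseNone_of_not_mem hnone).trans hw.2.1,
        independent_of_thieleWins_graphVotes hω0 hω2 hE2 hreg hw hnone⟩
    · rintro ⟨S, hSN, rfl, hS⟩
      exact ⟨S.image some, thieleWins_image_some_of_independent hω0 hω2 hE2 hreg hSN hS,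
        by simp⟩
  refine ⟨hiff, ?_⟩
  rw [← hiff]
  simp only [not_exists, not_and, not_not]

/-- Election built from a `t`-regular graph with vertex set `N` and edge set `E`
(edges are 2-element subsets of `N`): candidates are the vertices (as `some u`)
together with `p = none`; for each edge `{u, u'}` there is one vote `{u, u'}`, and
there are `t` votes `{p}`.  There is an `ω`-Thiele winning `k`-committee not
containing `p` iff the graph has an independent set of size `k`; consequently, `p`
belongs to all winning `k`-committees iff there is no independent set of size `k`. -/
theorem thiele_winner_vs_independent_set
    (N : Finset α) (E : Finset (Finset α)) (t k : ℕ)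
    (hE2 : ∀ e ∈ E, e.card = 2) (hEN : ∀ e ∈ E, e ⊆ N)
    (hreg : ∀ u ∈ N, (E.filter (fun e => u ∈ e)).card = t)
    (hk1 : 1 ≤ k) (hk : k ≤ N.card)
    (ω : ℕ → ℝ) (hω0 : ω 0 = 0) (hmono : Monotone ω) (hω2 : ω 2 < 2 * ω 1)
    (C : Finset (Option α)) (hC : C = insert none (N.image some))
    (V : Multiset (Finset (Option α)))
    (hV : V = E.val.map (fun e => e.image some) +
      Multiset.replicate t ({none} : Finset (Option α))) :
    ((∃ w, thieleWins ω C V k w ∧ none ∉ w) ↔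
      ∃ S ⊆ N, S.card = k ∧ ∀ e ∈ E, ¬ e ⊆ S) ∧
    ((∀ w, thieleWins ω C V k w → none ∈ w) ↔
      ¬ ∃ S ⊆ N, S.card = k ∧ ∀ e ∈ E, ¬ e ⊆ S) :=
  thiele_winner_vs_independent_set_general N E t k hE2 hreg ω hω0 hω2 C hC V hV

end Stmt11
end

section
/- Let ω be nondecreasing with ω(0) = 0 and ω(2) < 2ω(1), and let G = (N, E) be a t-regular graph. Construct the election with candidates C = N ∪ {p}, one vote {u, u'} per edge {u, u'} ∈ E, and t votes {p}. Then for any N' ⊆ N with |N'| ≥ 2, all ω-Thiele winning 2-committees of the election restricted to candidate set {p} ∪ N' contain p if and only if N' is a clique in G. -/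
namespace Stmt12

variable {α : Type*} [DecidableEq α]

/-- The `ω`-Thiele score of a committee `w`. -/
def thieleScore (ω : ℕ → ℝ) (V : Multiset (Finset (Option α))) (w : Finset (Option α)) : ℝ :=
  (V.map (fun v => ω (v ∩ w).card)).sum

/-- `w` is an `ω`-Thiele winning `k`-committee of the election `(C, V)`. -/
def thieleWins (ω : ℕ → ℝ) (C : Finset (Option α)) (V : Multiset (Finset (Option α)))
    (k : ℕ) (w : Finset (Option α)) : Prop :=
  w ⊆ C ∧ w.card = k ∧ ∀ w' ⊆ C, w'.card = k → thieleScore ω V w' ≤ thieleScore ω V w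

lemma score_restrict (ω : ℕ → ℝ) (V : Multiset (Finset (Option α)))
    (C' w : Finset (Option α)) (hw : w ⊆ C') :
    thieleScore ω (V.map (fun v => v ∩ C')) w = thieleScore ω V w := by
  unfold thieleScore
  rw [Multiset.map_map]
  congr 1
  apply Multiset.map_congr rfl
  intro v _
  simp only [Function.comp_apply]
  rw [Finset.inter_assoc, Finset.inter_eq_right.mpr hw]

lemma score_base (ω : ℕ → ℝ) (E : Finset (Finset α)) (t : ℕ)
    (V : Multiset (Finset (Option α)))
    (hV : V = E.val.map (fun e => e.image some) +
      Multiset.replicate t ({none} : Finset (Option α)))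
    (w : Finset (Option α)) :
    thieleScore ω V w = (∑ e ∈ E, ω ((e.image some ∩ w).card))
      + (t : ℝ) * ω ((({none} : Finset (Option α)) ∩ w).card) := by
  subst hV
  unfold thieleScore
  rw [Multiset.map_add, Multiset.sum_add, Multiset.map_map, Multiset.map_replicate,
    Multiset.sum_replicate, nsmul_eq_mul]
  rfl

lemma deg_sum (ω : ℕ → ℝ) (hω0 : ω 0 = 0) (N : Finset α) (E : Finset (Finset α)) (t : ℕ)
    (hreg : ∀ u ∈ N, (E.filter (fun e => u ∈ e)).card = t)
    (u : α) (hu : u ∈ N) :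
    (∑ e ∈ E, ω ((e ∩ {u}).card)) = (t : ℝ) * ω 1 := by
  have h : ∀ e ∈ E, ω ((e ∩ {u}).card) = if u ∈ e then ω 1 else 0 := by
    intro e _
    by_cases h : u ∈ e
    · rw [Finset.inter_singleton_of_mem h]; simp [h]
    · rw [Finset.inter_singleton_of_notMem h]; simp [h, hω0]
  rw [Finset.sum_congr rfl h, ← Finset.sum_filter, Finset.sum_const, hreg u hu, nsmul_eq_mul]

lemma pair_key (ω : ℕ → ℝ) (hω0 : ω 0 = 0) (u u' : α) (hne : u ≠ u')
    (e : Finset α) (he2 : e.card = 2) :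
    ω ((e ∩ ({u, u'} : Finset α)).card) = ω ((e ∩ {u}).card) + ω ((e ∩ {u'}).card)
      + (if e = ({u, u'} : Finset α) then ω 2 - 2 * ω 1 else 0) := by
  by_cases h1 : u ∈ e <;> by_cases h2 : u' ∈ e
  · have hsub : ({u, u'} : Finset α) ⊆ e := by
      intro x hx; simp only [Finset.mem_insert, Finset.mem_singleton] at hx
      rcases hx with rfl | rfl <;> assumption
    have heq : e = ({u, u'} : Finset α) :=
      (Finset.eq_of_subset_of_card_le hsub (by rw [he2, Finset.card_pair hne])).symm
    subst heq
    rw [Finset.inter_self, Finset.inter_singleton_of_mem h1, Finset.inter_singleton_of_mem h2,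
      if_pos rfl]
    simp only [Finset.card_pair hne, Finset.card_singleton]
    ring
  · have h3 : e ∩ ({u, u'} : Finset α) = {u} := by
      ext x
      simp only [Finset.mem_inter, Finset.mem_insert, Finset.mem_singleton]
      constructor
      · rintro ⟨hx, rfl | rfl⟩
        · rfl
        · exact absurd hx h2
      · rintro rfl; exact ⟨h1, Or.inl rfl⟩
    have hne' : e ≠ ({u, u'} : Finset α) := by
      intro h; apply h2; rw [h]; simp
    rw [h3, Finset.inter_singleton_of_mem h1, Finset.inter_singleton_of_notMem h2,
      if_neg hne', Finset.card_singleton, Finset.card_empty, hω0]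
    ring
  · have h3 : e ∩ ({u, u'} : Finset α) = {u'} := by
      ext x
      simp only [Finset.mem_inter, Finset.mem_insert, Finset.mem_singleton]
      constructor
      · rintro ⟨hx, rfl | rfl⟩
        · exact absurd hx h1
        · rfl
      · rintro rfl; exact ⟨h2, Or.inr rfl⟩
    have hne' : e ≠ ({u, u'} : Finset α) := by
      intro h; apply h1; rw [h]; simp
    rw [h3, Finset.inter_singleton_of_notMem h1, Finset.inter_singleton_of_mem h2,
      if_neg hne', Finset.card_singleton, Finset.card_empty, hω0]
    ring
  · have h3 : e ∩ ({u, u'} : Finset α) = ∅ := by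
      ext x
      simp only [Finset.mem_inter, Finset.mem_insert, Finset.mem_singleton,
        Finset.notMem_empty, iff_false, not_and]
      rintro hx (rfl | rfl)
      · exact h1 hx
      · exact h2 hx
    have hne' : e ≠ ({u, u'} : Finset α) := by
      intro h; apply h1; rw [h]; simp
    rw [h3, Finset.inter_singleton_of_notMem h1, Finset.inter_singleton_of_notMem h2,
      if_neg hne', Finset.card_empty, hω0]
    ring

lemma committee_cases (N' : Finset α) (C' : Finset (Option α))
    (hC' : C' = insert none (N'.image some)) (w : Finset (Option α))
    (hw : w ⊆ C') (hcard : w.card = 2) :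
    (∃ u ∈ N', w = {none, some u}) ∨
      (∃ u ∈ N', ∃ u' ∈ N', u ≠ u' ∧ w = {some u, some u'}) := by
  obtain ⟨x, y, hxy, rfl⟩ := Finset.card_eq_two.mp hcard
  have hx : x ∈ C' := hw (by simp)
  have hy : y ∈ C' := hw (by simp)
  rw [hC'] at hx hy
  simp only [Finset.mem_insert, Finset.mem_image] at hx hy
  rcases hx with rfl | ⟨u, hu, rfl⟩
  · rcases hy with rfl | ⟨u', hu', rfl⟩
    · exact absurd rfl hxy
    · exact Or.inl ⟨u', hu', rfl⟩
  · rcases hy with rfl | ⟨u', hu', rfl⟩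
    · exact Or.inl ⟨u, hu, Finset.pair_comm _ _⟩
    · refine Or.inr ⟨u, hu, u', hu', ?_, rfl⟩
      intro h; exact hxy (by rw [h])

/-- Election built from a `t`-regular graph with vertex set `N` and edge set `E`:
candidates are the vertices (as `some u`) plus `p = none`; one vote `{u, u'}` per
edge and `t` votes `{p}`.  For any `N' ⊆ N` with `|N'| ≥ 2`, all `ω`-Thiele winning
2-committees of the election restricted to `{p} ∪ N'` contain `p` iff `N'` is a
clique in the graph. -/
theorem thiele_ccdc_clique
    (N : Finset α) (E : Finset (Finset α)) (t : ℕ)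
    (hE2 : ∀ e ∈ E, e.card = 2) (hEN : ∀ e ∈ E, e ⊆ N)
    (hreg : ∀ u ∈ N, (E.filter (fun e => u ∈ e)).card = t)
    (ω : ℕ → ℝ) (hω0 : ω 0 = 0) (hmono : Monotone ω) (hω2 : ω 2 < 2 * ω 1)
    (V : Multiset (Finset (Option α)))
    (hV : V = E.val.map (fun e => e.image some) +
      Multiset.replicate t ({none} : Finset (Option α)))
    (N' : Finset α) (hN'N : N' ⊆ N) (hN'2 : 2 ≤ N'.card)
    (C' : Finset (Option α)) (hC' : C' = insert none (N'.image some)) :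
    ((∀ w, thieleWins ω C' (V.map (fun v => v ∩ C')) 2 w → none ∈ w) ↔
      ∀ u ∈ N', ∀ u' ∈ N', u ≠ u' → ({u, u'} : Finset α) ∈ E) := by
  set VR := V.map (fun v => v ∩ C') with hVR
  have hinj : Function.Injective (some : α → Option α) := Option.some_injective α
  -- subset facts
  have hsub1 : ∀ u ∈ N', ({none, some u} : Finset (Option α)) ⊆ C' := by
    intro u hu x hx
    rw [hC']
    simp only [Finset.mem_insert, Finset.mem_singleton] at hx
    rcases hx with rfl | rfl
    · simp
    · simp only [Finset.mem_insert, Finset.mem_image]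
      exact Or.inr ⟨u, hu, rfl⟩
  have hsub2 : ∀ u ∈ N', ∀ u' ∈ N', ({some u, some u'} : Finset (Option α)) ⊆ C' := by
    intro u hu u' hu' x hx
    rw [hC']
    simp only [Finset.mem_insert, Finset.mem_singleton] at hx
    simp only [Finset.mem_insert, Finset.mem_image]
    rcases hx with rfl | rfl
    · exact Or.inr ⟨u, hu, rfl⟩
    · exact Or.inr ⟨u', hu', rfl⟩
  -- score of {none, some u}
  have hscore1 : ∀ u ∈ N', thieleScore ω VR ({none, some u} : Finset (Option α))
      = (t : ℝ) * ω 1 + (t : ℝ) * ω 1 := by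
    intro u hu
    rw [hVR, score_restrict ω V C' _ (hsub1 u hu), score_base ω E t V hV]
    have h1 : (({none} : Finset (Option α)) ∩ {none, some u}).card = 1 := by
      rw [Finset.singleton_inter_of_mem (Finset.mem_insert_self _ _)]
      simp
    have h2 : ∀ e ∈ E, ω ((e.image some ∩ ({none, some u} : Finset (Option α))).card)
        = ω ((e ∩ {u}).card) := by
      intro e _
      have hn : (none : Option α) ∉ e.image some := by simp
      have : e.image some ∩ ({none, some u} : Finset (Option α)) = (e ∩ {u}).image some := by
        rw [show ({none, some u} : Finset (Option α)) = insert none {some u} from rfl,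
          Finset.inter_insert_of_notMem hn,
          show ({some u} : Finset (Option α)) = ({u} : Finset α).image some by simp,
          ← Finset.image_inter _ _ hinj]
      rw [this, Finset.card_image_of_injective _ hinj]
    rw [h1, Finset.sum_congr rfl h2, deg_sum ω hω0 N E t hreg u (hN'N hu)]
  -- score of {some u, some u'}
  have hscore2 : ∀ u ∈ N', ∀ u' ∈ N', u ≠ u' →
      thieleScore ω VR ({some u, some u'} : Finset (Option α))
      = (t : ℝ) * ω 1 + (t : ℝ) * ω 1
        + (if ({u, u'} : Finset α) ∈ E then ω 2 - 2 * ω 1 else 0) := by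
    intro u hu u' hu' hne
    rw [hVR, score_restrict ω V C' _ (hsub2 u hu u' hu'), score_base ω E t V hV]
    have h1 : (({none} : Finset (Option α)) ∩ {some u, some u'}).card = 0 := by
      rw [Finset.singleton_inter_of_notMem (by simp)]
      simp
    have h2 : ∀ e ∈ E, ω ((e.image some ∩ ({some u, some u'} : Finset (Option α))).card)
        = ω ((e ∩ ({u, u'} : Finset α)).card) := by
      intro e _
      have : e.image some ∩ ({some u, some u'} : Finset (Option α))
          = (e ∩ ({u, u'} : Finset α)).image some := by
        rw [show ({some u, some u'} : Finset (Option α)) = ({u, u'} : Finset α).image some by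
            simp [Finset.image_insert],
          ← Finset.image_inter _ _ hinj]
      rw [this, Finset.card_image_of_injective _ hinj]
    rw [h1, hω0, mul_zero, add_zero, Finset.sum_congr rfl h2]
    have h3 : ∀ e ∈ E, ω ((e ∩ ({u, u'} : Finset α)).card)
        = ω ((e ∩ {u}).card) + ω ((e ∩ {u'}).card)
          + (if e = ({u, u'} : Finset α) then ω 2 - 2 * ω 1 else 0) := by
      intro e he
      exact pair_key ω hω0 u u' hne e (hE2 e he)
    rw [Finset.sum_congr rfl h3, Finset.sum_add_distrib, Finset.sum_add_distrib,
      deg_sum ω hω0 N E t hreg u (hN'N hu), deg_sum ω hω0 N E t hreg u' (hN'N hu'),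
      Finset.sum_ite_eq' E ({u, u'} : Finset α) (fun _ => ω 2 - 2 * ω 1)]
  constructor
  · -- all winners contain none → clique
    intro hall u hu u' hu' hne
    by_contra hnE
    have hwcard : ({some u, some u'} : Finset (Option α)).card = 2 :=
      Finset.card_pair (fun h => hne (hinj h))
    have hwin : thieleWins ω C' VR 2 ({some u, some u'} : Finset (Option α)) := by
      refine ⟨hsub2 u hu u' hu', hwcard, ?_⟩
      intro w' hw' hcard'
      have hval : thieleScore ω VR ({some u, some u'} : Finset (Option α))
          = (t : ℝ) * ω 1 + (t : ℝ) * ω 1 := by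
        rw [hscore2 u hu u' hu' hne, if_neg hnE, add_zero]
      rw [hval]
      rcases committee_cases N' C' hC' w' hw' hcard' with ⟨v, hv, rfl⟩ |
        ⟨v, hv, v', hv', hvv, rfl⟩
      · rw [hscore1 v hv]
      · rw [hscore2 v hv v' hv' hvv]
        split_ifs with h
        · linarith
        · linarith
    have := hall _ hwin
    simp at this
  · -- clique → all winners contain none
    intro hcl w hwin
    by_contra hnone
    rcases committee_cases N' C' hC' w hwin.1 hwin.2.1 with ⟨v, hv, rfl⟩ |
      ⟨v, hv, v', hv', hvv, rfl⟩
    · exact hnone (Finset.mem_insert_self _ _)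
    · have hE' : ({v, v'} : Finset α) ∈ E := hcl v hv v' hv' hvv
      have hle := hwin.2.2 ({none, some v} : Finset (Option α)) (hsub1 v hv)
        (Finset.card_pair (by simp))
      rw [hscore1 v hv, hscore2 v hv v' hv' hvv, if_pos hE'] at hle
      linarith


end Stmt12
end

section
/- Correctness of the CCAV-to-RX3C reduction for MAV with k = 1: let A be a set of size 3κ (κ ≥ 1) and ℋ a family of 3κ three-element subsets of A with each a ∈ A occurring in exactly three members. Build candidates C = A ∪ {c(H₁), c(H₂), c(H₃) : H ∈ ℋ} ∪ {p}; one registered vote A ∪ {p}; and for each H ∈ ℋ an unregistered vote v(H) = {p, c(H₁), c(H₂), c(H₃)} ∪ (A \ H). Then there exists U' ⊆ {v(H) : H ∈ ℋ} with |U'| ≤ κ such that {p} is the unique MAV winning 1-committee of (C, V ∪ U') if and only if ℋ contains an exact cover of A by κ pairwise disjoint sets. -/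
namespace Stmt15

variable {α ι : Type*} [DecidableEq α] [DecidableEq ι] [Fintype ι]

/-- Candidates of the reduction: an element of `A`, a candidate `c(Hᵢ, j)` for
`i` indexing a member of `ℋ` and `j ∈ Fin 3`, or the distinguished candidate `p`. -/
abbrev Cand (α ι : Type*) := α ⊕ (ι × Fin 3) ⊕ Unit

/-- The distinguished candidate `p`. -/
def p : Cand α ι := Sum.inr (Sum.inr ())

/-- The MAV score of a committee `w`. -/
def mavScore (V : Multiset (Finset (Cand α ι))) (w : Finset (Cand α ι)) : ℕ :=
  (V.map (fun v => (w \ v).card + (v \ w).card)).sup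

/-- `w` is an MAV winning `k`-committee of the election `(C, V)`. -/
def mavWins (C : Finset (Cand α ι)) (V : Multiset (Finset (Cand α ι))) (k : ℕ)
    (w : Finset (Cand α ι)) : Prop :=
  w ⊆ C ∧ w.card = k ∧ ∀ w' ⊆ C, w'.card = k → mavScore V w ≤ mavScore V w'

/-- The registered vote: it approves all of `A` and `p`. -/
def regVote (A : Finset α) : Finset (Cand α ι) :=
  insert p (A.image Sum.inl)

/-- The unregistered vote `v(H)` for `H = Hf i`: it approves `p`, the three
candidates `c(H₁), c(H₂), c(H₃)`, and all of `A \ H`. -/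
def unregVote (A : Finset α) (Hf : ι → Finset α) (i : ι) : Finset (Cand α ι) :=
  insert p
    (((Finset.univ : Finset (Fin 3)).image (fun j => (Sum.inr (Sum.inl (i, j)) : Cand α ι)))
      ∪ ((A \ Hf i).image Sum.inl))

set_option linter.unusedSectionVars false
set_option linter.unusedVariables false

lemma singleton_score (c : Cand α ι) (v : Finset (Cand α ι)) :
    (({c} : Finset (Cand α ι)) \ v).card + (v \ {c}).card =
      if c ∈ v then v.card - 1 else v.card + 1 := by
  by_cases h : c ∈ v
  · rw [if_pos h, Finset.sdiff_eq_empty_iff_subset.2 (Finset.singleton_subset_iff.2 h),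
      Finset.card_sdiff_of_subset (Finset.singleton_subset_iff.2 h)]
    simp
  · rw [if_neg h, Finset.sdiff_eq_self_iff_disjoint.2 (by simp [h]),
      Finset.sdiff_eq_self_iff_disjoint.2 (by simp [h])]
    simp [Nat.add_comm]

lemma score_le_of_mem_all (V : Multiset (Finset (Cand α ι))) (n : ℕ) (c : Cand α ι)
    (hcard : ∀ v ∈ V, v.card = n + 1) (hmem : ∀ v ∈ V, c ∈ v) :
    mavScore V {c} ≤ n := by
  apply Multiset.sup_le.2
  intro x hx
  obtain ⟨v, hv, rfl⟩ := Multiset.mem_map.1 hx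
  rw [singleton_score, if_pos (hmem v hv), hcard v hv]
  omega

lemma score_ge (V : Multiset (Finset (Cand α ι))) (n : ℕ) (c : Cand α ι)
    (v₀ : Finset (Cand α ι)) (hv₀ : v₀ ∈ V) (hcard : v₀.card = n + 1) :
    n ≤ mavScore V {c} := by
  have h : (({c} : Finset (Cand α ι)) \ v₀).card + (v₀ \ {c}).card ≤ mavScore V {c} :=
    Multiset.le_sup (Multiset.mem_map_of_mem _ hv₀)
  rw [singleton_score, hcard] at h
  split_ifs at h <;> omega

lemma score_ge_of_not_mem (V : Multiset (Finset (Cand α ι))) (n : ℕ) (c : Cand α ι)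
    (v₀ : Finset (Cand α ι)) (hv₀ : v₀ ∈ V) (hcard : v₀.card = n + 1) (hc : c ∉ v₀) :
    n + 2 ≤ mavScore V {c} := by
  have h : (({c} : Finset (Cand α ι)) \ v₀).card + (v₀ \ {c}).card ≤ mavScore V {c} :=
    Multiset.le_sup (Multiset.mem_map_of_mem _ hv₀)
  rw [singleton_score, hcard, if_neg hc] at h
  omega

lemma count_aux (T : Finset ι) (A : Finset α) (Hf : ι → Finset α)
    (hHA : ∀ i, Hf i ⊆ A) (hH3 : ∀ i, (Hf i).card = 3) :
    ∑ a ∈ A, (T.filter (fun i => a ∈ Hf i)).card = 3 * T.card := by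
  have h1 : ∀ a, (T.filter (fun i => a ∈ Hf i)).card
      = ∑ i ∈ T, if a ∈ Hf i then 1 else 0 := fun a => Finset.card_filter _ _
  simp_rw [h1]
  rw [Finset.sum_comm]
  have h2 : ∀ i, (∑ a ∈ A, if a ∈ Hf i then 1 else 0) = 3 := by
    intro i
    rw [← Finset.card_filter]
    have : A.filter (fun a => a ∈ Hf i) = Hf i := by
      ext a; simp only [Finset.mem_filter]
      exact ⟨fun h => h.2, fun h => ⟨hHA i h, h⟩⟩
    rw [this, hH3]
  simp_rw [h2]
  rw [Finset.sum_const, smul_eq_mul, mul_comm]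

lemma mem_regVote_inl (A : Finset α) (a : α) :
    (Sum.inl a : Cand α ι) ∈ regVote A ↔ a ∈ A := by simp [regVote, p]

lemma mem_unregVote_inl (A : Finset α) (Hf : ι → Finset α) (i : ι) (a : α) :
    (Sum.inl a : Cand α ι) ∈ unregVote A Hf i ↔ a ∈ A \ Hf i := by simp [unregVote, p]

lemma not_mem_regVote_inr (A : Finset α) (q : ι × Fin 3) :
    (Sum.inr (Sum.inl q) : Cand α ι) ∉ regVote A := by simp [regVote, p]

lemma p_mem_regVote (A : Finset α) : (p : Cand α ι) ∈ regVote A := Finset.mem_insert_self _ _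
lemma p_mem_unregVote (A : Finset α) (Hf : ι → Finset α) (i : ι) :
    (p : Cand α ι) ∈ unregVote A Hf i := Finset.mem_insert_self _ _

lemma card_regVote (A : Finset α) : (regVote A : Finset (Cand α ι)).card = A.card + 1 := by
  rw [regVote, Finset.card_insert_of_notMem (by simp [p]),
    Finset.card_image_of_injective _ Sum.inl_injective]

lemma card_unregVote (A : Finset α) (Hf : ι → Finset α) (i : ι)
    (h3 : (Hf i).card = 3) (hsub : Hf i ⊆ A) :
    (unregVote A Hf i : Finset (Cand α ι)).card = A.card + 1 := by
  have hd : Disjoint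
      (((Finset.univ : Finset (Fin 3)).image (fun j => (Sum.inr (Sum.inl (i, j)) : Cand α ι))))
      ((A \ Hf i).image Sum.inl) := by
    simp [Finset.disjoint_left]
  rw [unregVote, Finset.card_insert_of_notMem (by simp [p]), Finset.card_union_of_disjoint hd,
    Finset.card_image_of_injective _ Sum.inl_injective,
    Finset.card_image_of_injective _ (by intro x y h; simpa using h),
    Finset.card_sdiff_of_subset hsub, h3]
  have : 3 ≤ A.card := h3 ▸ Finset.card_le_card hsub
  simp [Fintype.card_fin] at *
  omega

/-- Correctness of the CCAV-to-RX3C reduction for MAV with `k = 1`: some subfamily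
of at most `κ` unregistered votes can be added so that `{p}` is the unique MAV
winning 1-committee iff `ℋ` contains an exact cover of `A`. -/
theorem ccav_mav_rx3c_correct
    (κ : ℕ) (hκ : 1 ≤ κ) (A : Finset α) (hA : A.card = 3 * κ)
    (Hf : ι → Finset α) (hι : Fintype.card ι = 3 * κ)
    (hH3 : ∀ i, (Hf i).card = 3) (hHA : ∀ i, Hf i ⊆ A)
    (hocc : ∀ a ∈ A, (Finset.univ.filter (fun i => a ∈ Hf i)).card = 3)
    (C : Finset (Cand α ι))
    (hC : C = (A.image Sum.inl) ∪
      ((Finset.univ : Finset (ι × Fin 3)).image (fun q => Sum.inr (Sum.inl q))) ∪ {p}) :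
    ((∃ T : Finset ι, T.card ≤ κ ∧
        mavWins C ((regVote A : Finset (Cand α ι)) ::ₘ T.val.map (unregVote A Hf)) 1 {p} ∧
        ∀ w, mavWins C ((regVote A : Finset (Cand α ι)) ::ₘ T.val.map (unregVote A Hf)) 1 w →
          w = {p}) ↔
      ∃ T : Finset ι, ∀ a ∈ A, ∃! i, i ∈ T ∧ a ∈ Hf i) := by
  have hpC : (p : Cand α ι) ∈ C := by simp [hC]
  -- facts depending only on T
  have hcardV : ∀ (T : Finset ι) (v : Finset (Cand α ι)),
      v ∈ ((regVote A : Finset (Cand α ι)) ::ₘ T.val.map (unregVote A Hf)) →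
        v.card = 3 * κ + 1 := by
    intro T v hv
    rcases Multiset.mem_cons.1 hv with h | h
    · rw [h, card_regVote, hA]
    · obtain ⟨i, _, rfl⟩ := Multiset.mem_map.1 h
      rw [card_unregVote A Hf i (hH3 i) (hHA i), hA]
  have hregV : ∀ (T : Finset ι),
      (regVote A : Finset (Cand α ι)) ∈
        ((regVote A : Finset (Cand α ι)) ::ₘ T.val.map (unregVote A Hf)) :=
    fun T => Multiset.mem_cons_self _ _
  have hanyge : ∀ (T : Finset ι) (c : Cand α ι),
      3 * κ ≤ mavScore ((regVote A : Finset (Cand α ι)) ::ₘ T.val.map (unregVote A Hf)) {c} := by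
    intro T c
    exact score_ge _ _ c (regVote A) (hregV T) (by rw [card_regVote, hA])
  constructor
  · rintro ⟨T, hTκ, _, huniq⟩
    refine ⟨T, fun a ha => ?_⟩
    -- first: coverage
    have hcov : ∀ a ∈ A, ∃ i ∈ T, a ∈ Hf i := by
      intro b hb
      by_contra hno
      push_neg at hno
      have hmemall : ∀ v ∈ ((regVote A : Finset (Cand α ι)) ::ₘ T.val.map (unregVote A Hf)),
          (Sum.inl b : Cand α ι) ∈ v := by
        intro v hv
        rcases Multiset.mem_cons.1 hv with h | h
        · rw [h]; exact (mem_regVote_inl A b).2 hb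
        · obtain ⟨i, hi, rfl⟩ := Multiset.mem_map.1 h
          exact (mem_unregVote_inl A Hf i b).2 (Finset.mem_sdiff.2 ⟨hb, hno i hi⟩)
      have hwinb : mavWins C ((regVote A : Finset (Cand α ι)) ::ₘ T.val.map (unregVote A Hf)) 1
          {Sum.inl b} := by
        refine ⟨Finset.singleton_subset_iff.2 (by simp [hC, hb]), Finset.card_singleton _, ?_⟩
        intro w' hw' hcw'
        obtain ⟨c, rfl⟩ := Finset.card_eq_one.1 hcw'
        exact le_trans (score_le_of_mem_all _ _ _ (hcardV T) hmemall) (hanyge T c)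
      have := huniq _ hwinb
      have : (Sum.inl b : Cand α ι) = p := by
        rwa [Finset.singleton_inj] at this
      simp [p] at this
    -- counting
    have hge1 : ∀ a ∈ A, 1 ≤ (T.filter (fun i => a ∈ Hf i)).card := by
      intro a ha
      obtain ⟨i, hi, hai⟩ := hcov a ha
      exact Finset.card_pos.2 ⟨i, Finset.mem_filter.2 ⟨hi, hai⟩⟩
    have hsum : ∑ a ∈ A, (T.filter (fun i => a ∈ Hf i)).card = 3 * T.card :=
      count_aux T A Hf hHA hH3
    have hone : ∀ a ∈ A, (T.filter (fun i => a ∈ Hf i)).card = 1 := by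
      intro a ha
      by_contra hne
      have h2 : 2 ≤ (T.filter (fun i => a ∈ Hf i)).card := by
        have := hge1 a ha; omega
      have hlt : ∑ a ∈ A, (1 : ℕ) < ∑ a ∈ A, (T.filter (fun i => a ∈ Hf i)).card :=
        Finset.sum_lt_sum (fun b hb => hge1 b hb) ⟨a, ha, by omega⟩
      rw [Finset.sum_const, smul_eq_mul, mul_one, hsum, hA] at hlt
      omega
    obtain ⟨i₀, hi₀⟩ := Finset.card_eq_one.1 (hone a ha)
    have hmem : i₀ ∈ T.filter (fun i => a ∈ Hf i) := hi₀ ▸ Finset.mem_singleton_self i₀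
    refine ⟨i₀, ⟨(Finset.mem_filter.1 hmem).1, (Finset.mem_filter.1 hmem).2⟩, ?_⟩
    intro j hj
    have : j ∈ T.filter (fun i => a ∈ Hf i) := Finset.mem_filter.2 ⟨hj.1, hj.2⟩
    rw [hi₀] at this
    exact Finset.mem_singleton.1 this
  · rintro ⟨T, hex⟩
    have hone : ∀ a ∈ A, (T.filter (fun i => a ∈ Hf i)).card = 1 := by
      intro a ha
      obtain ⟨i₀, hi₀, huni⟩ := hex a ha
      rw [Finset.card_eq_one]
      refine ⟨i₀, ?_⟩
      ext j
      simp only [Finset.mem_filter, Finset.mem_singleton]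
      exact ⟨fun h => huni j h, fun h => h ▸ ⟨hi₀.1, hi₀.2⟩⟩
    have hsum : ∑ a ∈ A, (T.filter (fun i => a ∈ Hf i)).card = 3 * T.card :=
      count_aux T A Hf hHA hH3
    have hTcard : T.card = κ := by
      rw [Finset.sum_congr rfl hone, Finset.sum_const, smul_eq_mul, mul_one, hA] at hsum
      omega
    have hpall : ∀ v ∈ ((regVote A : Finset (Cand α ι)) ::ₘ T.val.map (unregVote A Hf)),
        (p : Cand α ι) ∈ v := by
      intro v hv
      rcases Multiset.mem_cons.1 hv with h | h
      · rw [h]; exact p_mem_regVote A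
      · obtain ⟨i, _, rfl⟩ := Multiset.mem_map.1 h
        exact p_mem_unregVote A Hf i
    have hple : mavScore ((regVote A : Finset (Cand α ι)) ::ₘ T.val.map (unregVote A Hf)) {p}
        ≤ 3 * κ := score_le_of_mem_all _ _ _ (hcardV T) hpall
    have hpwins : mavWins C ((regVote A : Finset (Cand α ι)) ::ₘ T.val.map (unregVote A Hf)) 1
        {p} := by
      refine ⟨Finset.singleton_subset_iff.2 hpC, Finset.card_singleton _, ?_⟩
      intro w' hw' hcw'
      obtain ⟨c, rfl⟩ := Finset.card_eq_one.1 hcw'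
      exact le_trans hple (hanyge T c)
    refine ⟨T, le_of_eq hTcard, hpwins, ?_⟩
    rintro w ⟨hwC, hw1, hmin⟩
    obtain ⟨c, rfl⟩ := Finset.card_eq_one.1 hw1
    have hcle : mavScore ((regVote A : Finset (Cand α ι)) ::ₘ T.val.map (unregVote A Hf)) {c}
        ≤ 3 * κ :=
      le_trans (hmin {p} (Finset.singleton_subset_iff.2 hpC) (Finset.card_singleton _)) hple
    have hcC : c ∈ C := hwC (Finset.mem_singleton_self c)
    rcases c with a | q | u
    · -- c = Sum.inl a, a ∈ A
      exfalso
      have haA : a ∈ A := by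
        rw [hC] at hcC
        simp [p] at hcC
        exact hcC
      obtain ⟨i₀, hi₀, _⟩ := hex a haA
      have hvmem : unregVote A Hf i₀ ∈
          ((regVote A : Finset (Cand α ι)) ::ₘ T.val.map (unregVote A Hf)) :=
        Multiset.mem_cons.2 (Or.inr (Multiset.mem_map_of_mem _ hi₀.1))
      have hnot : (Sum.inl a : Cand α ι) ∉ unregVote A Hf i₀ := by
        rw [mem_unregVote_inl, Finset.mem_sdiff]
        exact fun h => h.2 hi₀.2
      have := score_ge_of_not_mem _ (3 * κ) _ _ hvmem
        (by rw [card_unregVote A Hf i₀ (hH3 i₀) (hHA i₀), hA]) hnot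
      omega
    · exfalso
      have := score_ge_of_not_mem _ (3 * κ) (Sum.inr (Sum.inl q)) _ (hregV T)
        (by rw [card_regVote, hA]) (not_mem_regVote_inr A q)
      omega
    · simp [p]


end Stmt15
end

section
/- Correctness of the CCDC-to-RX3C reduction for MAV with k = 1: let A be a set of size 3κ (κ ≥ 1) and ℋ a family of 3κ three-element subsets of A with each a ∈ A in exactly three members. Build candidates C = {p, d₁, d₂, d₃, d₄} ∪ {c(H) : H ∈ ℋ} and votes v₁ = {p, d₁, d₂}, v₂ = {p, d₃, d₄}, plus for each a ∈ A a vote v(a) = {c(H) : a ∈ H ∈ ℋ}. Then there exists C' ⊆ C \ {p} with |C'| ≤ κ such that {p} is the unique MAV winning 1-committee of the election restricted to C \ C' if and only if ℋ contains an exact cover of A (κ pairwise disjoint members covering A). -/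
namespace Stmt16

variable {α ι : Type*} [DecidableEq α] [DecidableEq ι] [Fintype ι]

/-- Candidates of the reduction: one candidate `c(H)` per member of `ℋ` (indexed by
`ι`), plus `p = Sum.inr 0` and dummies `d₁, d₂, d₃, d₄ = Sum.inr 1, …, Sum.inr 4`. -/
abbrev Cand (ι : Type*) := ι ⊕ Fin 5

/-- The distinguished candidate `p`. -/
def p : Cand ι := Sum.inr 0

/-- The MAV score of a committee `w`. -/
def mavScore (V : Multiset (Finset (Cand ι))) (w : Finset (Cand ι)) : ℕ :=
  (V.map (fun v => (w \ v).card + (v \ w).card)).sup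

/-- `w` is an MAV winning `k`-committee of the election `(C, V)`. -/
def mavWins (C : Finset (Cand ι)) (V : Multiset (Finset (Cand ι))) (k : ℕ)
    (w : Finset (Cand ι)) : Prop :=
  w ⊆ C ∧ w.card = k ∧ ∀ w' ⊆ C, w'.card = k → mavScore V w ≤ mavScore V w'

/-- The vote `v(a)` for `a ∈ A`: it approves the candidates `c(H)` with `a ∈ H`. -/
def va (Hf : ι → Finset α) (a : α) : Finset (Cand ι) :=
  (Finset.univ.filter (fun i => a ∈ Hf i)).image Sum.inl

/-- The votes of the reduction: `v₁ = {p, d₁, d₂}`, `v₂ = {p, d₃, d₄}`, and one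
vote `v(a)` per `a ∈ A`. -/
def votes (A : Finset α) (Hf : ι → Finset α) : Multiset (Finset (Cand ι)) :=
  ({Sum.inr 0, Sum.inr 1, Sum.inr 2} : Finset (Cand ι)) ::ₘ
    ({Sum.inr 0, Sum.inr 3, Sum.inr 4} : Finset (Cand ι)) ::ₘ
    A.val.map (va Hf)

set_option linter.unusedSectionVars false

/-! ### Auxiliary lemmas -/

lemma singleton_score (c : Cand ι) (v : Finset (Cand ι)) :
    (({c} : Finset (Cand ι)) \ v).card + (v \ {c}).card
      = if c ∈ v then v.card - 1 else v.card + 1 := by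
  by_cases h : c ∈ v
  · have h1 : ({c} : Finset (Cand ι)) \ v = ∅ := by
      rw [Finset.sdiff_eq_empty_iff_subset, Finset.singleton_subset_iff]; exact h
    rw [if_pos h, h1, Finset.sdiff_singleton_eq_erase, Finset.card_erase_of_mem h,
      Finset.card_empty, Nat.zero_add]
  · have h1 : ({c} : Finset (Cand ι)) \ v = {c} := by
      rw [Finset.sdiff_eq_self_iff_disjoint, Finset.disjoint_singleton_left]; exact h
    rw [if_neg h, h1, Finset.sdiff_singleton_eq_erase, Finset.erase_eq_of_notMem h,
      Finset.card_singleton, Nat.add_comm]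

lemma va_card {Hf : ι → Finset α} {a : α}
    (h : (Finset.univ.filter (fun i => a ∈ Hf i)).card = 3) :
    (va Hf a).card = 3 := by
  rw [va, Finset.card_image_of_injective _ Sum.inl_injective, h]

lemma p_not_mem_va (Hf : ι → Finset α) (a : α) : (p : Cand ι) ∉ va Hf a := by
  simp [va, p]

lemma v1_card : ({Sum.inr 0, Sum.inr 1, Sum.inr 2} : Finset (Cand ι)).card = 3 := by
  simp

lemma v2_card : ({Sum.inr 0, Sum.inr 3, Sum.inr 4} : Finset (Cand ι)).card = 3 := by
  simp

lemma mem_votes_cases {A : Finset α} {Hf : ι → Finset α} {v : Finset (Cand ι)}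
    (hv : v ∈ votes A Hf) :
    v = ({Sum.inr 0, Sum.inr 1, Sum.inr 2} : Finset (Cand ι)) ∨
      v = ({Sum.inr 0, Sum.inr 3, Sum.inr 4} : Finset (Cand ι)) ∨
      ∃ a ∈ A, v = va Hf a := by
  rw [votes, Multiset.mem_cons, Multiset.mem_cons] at hv
  rcases hv with rfl | rfl | hv
  · exact Or.inl rfl
  · exact Or.inr (Or.inl rfl)
  · obtain ⟨a, ha, rfl⟩ := Multiset.mem_map.mp hv
    exact Or.inr (Or.inr ⟨a, Finset.mem_val.mp ha, rfl⟩)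

lemma v1_mem_votes (A : Finset α) (Hf : ι → Finset α) :
    ({Sum.inr 0, Sum.inr 1, Sum.inr 2} : Finset (Cand ι)) ∈ votes A Hf :=
  Multiset.mem_cons_self _ _

lemma v2_mem_votes (A : Finset α) (Hf : ι → Finset α) :
    ({Sum.inr 0, Sum.inr 3, Sum.inr 4} : Finset (Cand ι)) ∈ votes A Hf :=
  Multiset.mem_cons_of_mem (Multiset.mem_cons_self _ _)

lemma va_mem_votes (A : Finset α) (Hf : ι → Finset α) {a : α} (ha : a ∈ A) :
    va Hf a ∈ votes A Hf :=
  Multiset.mem_cons_of_mem (Multiset.mem_cons_of_mem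
    (Multiset.mem_map.mpr ⟨a, Finset.mem_val.mpr ha, rfl⟩))

lemma vote_card {A : Finset α} {Hf : ι → Finset α}
    (hocc : ∀ a ∈ A, (Finset.univ.filter (fun i => a ∈ Hf i)).card = 3) :
    ∀ v ∈ votes A Hf, v.card = 3 := by
  intro v hv
  rcases mem_votes_cases hv with rfl | rfl | ⟨a, ha, rfl⟩
  · exact v1_card
  · exact v2_card
  · exact va_card (hocc a ha)

lemma mavScore_singleton_le {A : Finset α} {Hf : ι → Finset α}
    (D : Finset (Cand ι)) (c : Cand ι) {n : ℕ}
    (h : ∀ v ∈ votes A Hf,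
      (if c ∈ v ∩ D then (v ∩ D).card - 1 else (v ∩ D).card + 1) ≤ n) :
    mavScore ((votes A Hf).map (fun v => v ∩ D)) {c} ≤ n := by
  rw [mavScore, Multiset.map_map]
  apply Multiset.sup_le.mpr
  intro b hb
  obtain ⟨v, hv, rfl⟩ := Multiset.mem_map.mp hb
  show (({c} : Finset (Cand ι)) \ (v ∩ D)).card + ((v ∩ D) \ {c}).card ≤ n
  rw [singleton_score]
  exact h v hv

lemma le_mavScore_singleton {A : Finset α} {Hf : ι → Finset α}
    (D : Finset (Cand ι)) (c : Cand ι) {v : Finset (Cand ι)} (hv : v ∈ votes A Hf) :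
    (if c ∈ v ∩ D then (v ∩ D).card - 1 else (v ∩ D).card + 1)
      ≤ mavScore ((votes A Hf).map (fun v => v ∩ D)) {c} := by
  rw [mavScore, Multiset.map_map, ← singleton_score]
  exact Multiset.le_sup (Multiset.mem_map.mpr ⟨v, hv, rfl⟩)

lemma double_count (A : Finset α) (Hf : ι → Finset α) (hH3 : ∀ i, (Hf i).card = 3)
    (hHA : ∀ i, Hf i ⊆ A) (T : Finset ι) :
    ∑ a ∈ A, (T.filter (fun i => a ∈ Hf i)).card = 3 * T.card := by
  have h1 : ∀ a, (T.filter (fun i => a ∈ Hf i)).card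
      = ∑ i ∈ T, if a ∈ Hf i then 1 else 0 := fun a => Finset.card_filter _ _
  calc ∑ a ∈ A, (T.filter (fun i => a ∈ Hf i)).card
      = ∑ a ∈ A, ∑ i ∈ T, if a ∈ Hf i then 1 else 0 := Finset.sum_congr rfl (fun a _ => h1 a)
    _ = ∑ i ∈ T, ∑ a ∈ A, if a ∈ Hf i then 1 else 0 := Finset.sum_comm
    _ = ∑ i ∈ T, (3 : ℕ) := by
        refine Finset.sum_congr rfl (fun i _ => ?_)
        rw [← Finset.card_filter, Finset.filter_mem_eq_inter,
          Finset.inter_eq_right.mpr (hHA i), hH3 i]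
    _ = 3 * T.card := by rw [Finset.sum_const, smul_eq_mul, mul_comm]

/-- Correctness of the CCDC-to-RX3C reduction for MAV with `k = 1`: at most `κ`
candidates other than `p` can be deleted so that `{p}` becomes the unique MAV
winning 1-committee of the restricted election iff `ℋ` contains an exact cover. -/
theorem ccdc_mav_rx3c_correct
    (κ : ℕ) (hκ : 1 ≤ κ) (A : Finset α) (hA : A.card = 3 * κ)
    (Hf : ι → Finset α) (hι : Fintype.card ι = 3 * κ)
    (hH3 : ∀ i, (Hf i).card = 3) (hHA : ∀ i, Hf i ⊆ A)
    (hocc : ∀ a ∈ A, (Finset.univ.filter (fun i => a ∈ Hf i)).card = 3)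
    (C : Finset (Cand ι)) (hC : C = Finset.univ) :
    ((∃ C' : Finset (Cand ι), C' ⊆ C \ {p} ∧ C'.card ≤ κ ∧
        mavWins (C \ C') ((votes A Hf).map (fun v => v ∩ (C \ C'))) 1 {p} ∧
        ∀ w, mavWins (C \ C') ((votes A Hf).map (fun v => v ∩ (C \ C'))) 1 w →
          w = {p}) ↔
      ∃ T : Finset ι, ∀ a ∈ A, ∃! i, i ∈ T ∧ a ∈ Hf i) := by
  subst hC
  constructor
  · -- forward direction
    rintro ⟨C', hC'sub, hC'card, hwin, huniq⟩
    set D := (Finset.univ : Finset (Cand ι)) \ C' with hD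
    have hpC' : (p : Cand ι) ∉ C' := by
      intro h
      have := hC'sub h
      rw [Finset.mem_sdiff] at this
      exact this.2 (Finset.mem_singleton_self _)
    have hpD : (p : Cand ι) ∈ D := Finset.mem_sdiff.mpr ⟨Finset.mem_univ _, hpC'⟩
    have hinterD : ∀ v : Finset (Cand ι), v ∩ D = v \ C' := by
      intro v
      ext x
      simp [hD, Finset.mem_sdiff, Finset.mem_inter]
    have hkey : ∀ a ∈ A, ∃ i, a ∈ Hf i ∧ Sum.inl i ∈ C' := by
      intro a ha
      by_contra hcon
      push_neg at hcon
      have hfull : va Hf a ∩ D = va Hf a := by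
        rw [hinterD, Finset.sdiff_eq_self_iff_disjoint, Finset.disjoint_left]
        intro x hx hx'
        obtain ⟨i, hi, rfl⟩ := Finset.mem_image.mp hx
        exact hcon i (by simpa using hi) hx'
      have h4 : 4 ≤ mavScore ((votes A Hf).map (fun v => v ∩ D)) {(p : Cand ι)} := by
        have := le_mavScore_singleton D (p : Cand ι) (va_mem_votes A Hf ha)
        rw [hfull, if_neg (p_not_mem_va Hf a), va_card (hocc a ha)] at this
        exact this
      have hDcard : 1 < D.card := by
        have hcu : (Finset.univ : Finset (Cand ι)).card = 3 * κ + 5 := by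
          rw [Finset.card_univ, Fintype.card_sum, hι, Fintype.card_fin]
        rw [hD, Finset.card_sdiff_of_subset (Finset.subset_univ _), hcu]
        omega
      obtain ⟨c, hcD, hcp⟩ := Finset.exists_mem_ne hDcard p
      have hc4 : mavScore ((votes A Hf).map (fun v => v ∩ D)) {c} ≤ 4 := by
        apply mavScore_singleton_le
        intro v hv
        have h3 : (v ∩ D).card ≤ 3 :=
          le_trans (Finset.card_le_card Finset.inter_subset_left)
            (le_of_eq (vote_card hocc v hv))
        split <;> omega
      have hple := hwin.2.2 {c} (Finset.singleton_subset_iff.mpr hcD)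
        (Finset.card_singleton c)
      have heq : mavScore ((votes A Hf).map (fun v => v ∩ D)) {c}
          = mavScore ((votes A Hf).map (fun v => v ∩ D)) {(p : Cand ι)} :=
        le_antisymm (le_trans hc4 h4) hple
      have hcwins : ({c} : Finset (Cand ι)) = {p} :=
        huniq {c} ⟨Finset.singleton_subset_iff.mpr hcD, Finset.card_singleton c,
          fun w' hw' hw'c => heq ▸ hwin.2.2 w' hw' hw'c⟩
      exact hcp (by simpa using hcwins)
    refine ⟨Finset.univ.filter (fun i : ι => Sum.inl i ∈ C'), ?_⟩
    set T := Finset.univ.filter (fun i : ι => Sum.inl i ∈ C') with hT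
    have hTcard : T.card ≤ κ := by
      have hsub : T.image Sum.inl ⊆ C' := by
        intro x hx
        obtain ⟨i, hi, rfl⟩ := Finset.mem_image.mp hx
        exact (Finset.mem_filter.mp hi).2
      calc T.card = (T.image Sum.inl).card :=
            (Finset.card_image_of_injective _ Sum.inl_injective).symm
        _ ≤ C'.card := Finset.card_le_card hsub
        _ ≤ κ := hC'card
    have hsum := double_count A Hf hH3 hHA T
    have hone : ∀ a ∈ A, 1 ≤ (T.filter (fun i => a ∈ Hf i)).card := by
      intro a ha
      obtain ⟨i, hai, hiC⟩ := hkey a ha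
      exact Finset.card_pos.mpr ⟨i, Finset.mem_filter.mpr
        ⟨Finset.mem_filter.mpr ⟨Finset.mem_univ _, hiC⟩, hai⟩⟩
    have hcard1 : ∀ a ∈ A, (T.filter (fun i => a ∈ Hf i)).card = 1 := by
      by_contra hcon
      push_neg at hcon
      obtain ⟨a0, ha0, hne⟩ := hcon
      have hlt : (1 : ℕ) < (T.filter (fun i => a0 ∈ Hf i)).card :=
        lt_of_le_of_ne (hone a0 ha0) (Ne.symm hne)
      have hstrict := Finset.sum_lt_sum (f := fun _ : α => (1 : ℕ))
        (g := fun a => (T.filter (fun i => a ∈ Hf i)).card)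
        (fun a ha => hone a ha) ⟨a0, ha0, hlt⟩
      rw [Finset.sum_const, smul_eq_mul, mul_one, hA, hsum] at hstrict
      omega
    intro a ha
    obtain ⟨i, hi⟩ := Finset.card_eq_one.mp (hcard1 a ha)
    have hi_mem : i ∈ T.filter (fun i => a ∈ Hf i) := hi ▸ Finset.mem_singleton_self i
    have hi_mem' := Finset.mem_filter.mp hi_mem
    refine ⟨i, ⟨hi_mem'.1, hi_mem'.2⟩, ?_⟩
    intro j hj
    have : j ∈ T.filter (fun i => a ∈ Hf i) := Finset.mem_filter.mpr ⟨hj.1, hj.2⟩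
    rw [hi, Finset.mem_singleton] at this
    exact this
  · -- backward direction
    rintro ⟨T, hT⟩
    have hfil : ∀ a ∈ A, (T.filter (fun i => a ∈ Hf i)).card = 1 := by
      intro a ha
      obtain ⟨i, hi, hu⟩ := hT a ha
      rw [Finset.card_eq_one]
      refine ⟨i, ?_⟩
      ext j
      simp only [Finset.mem_filter, Finset.mem_singleton]
      constructor
      · intro hj
        exact hu j hj
      · rintro rfl
        exact ⟨hi.1, hi.2⟩
    have hTκ : T.card = κ := by
      have hsum := double_count A Hf hH3 hHA T
      have hsum2 : ∑ a ∈ A, (T.filter (fun i => a ∈ Hf i)).card = ∑ _a ∈ A, 1 :=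
        Finset.sum_congr rfl (fun a ha => hfil a ha)
      rw [hsum2, Finset.sum_const, smul_eq_mul, mul_one, hA] at hsum
      omega
    set C' : Finset (Cand ι) := T.image Sum.inl with hC'
    set D := (Finset.univ : Finset (Cand ι)) \ C' with hD
    have hinterD : ∀ v : Finset (Cand ι), v ∩ D = v \ C' := by
      intro v
      ext x
      simp [hD, Finset.mem_sdiff, Finset.mem_inter]
    have hinrD : ∀ j : Fin 5, (Sum.inr j : Cand ι) ∈ D := by
      intro j
      refine Finset.mem_sdiff.mpr ⟨Finset.mem_univ _, ?_⟩
      simp [hC']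
    have hpD : (p : Cand ι) ∈ D := hinrD 0
    have hv1D : ({Sum.inr 0, Sum.inr 1, Sum.inr 2} : Finset (Cand ι)) ∩ D
        = {Sum.inr 0, Sum.inr 1, Sum.inr 2} := by
      apply Finset.inter_eq_left.mpr
      intro x hx
      simp only [Finset.mem_insert, Finset.mem_singleton] at hx
      rcases hx with rfl | rfl | rfl <;> exact hinrD _
    have hv2D : ({Sum.inr 0, Sum.inr 3, Sum.inr 4} : Finset (Cand ι)) ∩ D
        = {Sum.inr 0, Sum.inr 3, Sum.inr 4} := by
      apply Finset.inter_eq_left.mpr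
      intro x hx
      simp only [Finset.mem_insert, Finset.mem_singleton] at hx
      rcases hx with rfl | rfl | rfl <;> exact hinrD _
    have hvaD : ∀ a ∈ A, (va Hf a ∩ D).card = 2 := by
      intro a ha
      rw [hinterD, va, hC', ← Finset.image_sdiff _ _ Sum.inl_injective,
        Finset.card_image_of_injective _ Sum.inl_injective]
      have hbal := Finset.card_inter_add_card_sdiff
        (Finset.univ.filter (fun i => a ∈ Hf i)) T
      have hint : (Finset.univ.filter (fun i => a ∈ Hf i)) ∩ T
          = T.filter (fun i => a ∈ Hf i) := by
        ext j
        simp only [Finset.mem_inter, Finset.mem_filter, Finset.mem_univ, true_and]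
        exact and_comm
      rw [hint, hfil a ha, hocc a ha] at hbal
      omega
    have hp3 : mavScore ((votes A Hf).map (fun v => v ∩ D)) {(p : Cand ι)} ≤ 3 := by
      apply mavScore_singleton_le
      intro v hv
      rcases mem_votes_cases hv with rfl | rfl | ⟨a, ha, rfl⟩
      · rw [hv1D, if_pos (by simp [p]), v1_card]
        omega
      · rw [hv2D, if_pos (by simp [p]), v2_card]
        omega
      · have hpn : (p : Cand ι) ∉ va Hf a ∩ D :=
          fun h => p_not_mem_va Hf a (Finset.mem_inter.mp h).1
        rw [if_neg hpn, hvaD a ha]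
    have hge4 : ∀ c ∈ D, c ≠ p →
        4 ≤ mavScore ((votes A Hf).map (fun v => v ∩ D)) {c} := by
      have haux : ∀ (c : Cand ι) (v : Finset (Cand ι)), v ∈ votes A Hf →
          v ∩ D = v → v.card = 3 → c ∉ v →
          4 ≤ mavScore ((votes A Hf).map (fun v => v ∩ D)) {c} := by
        intro c v hv hvD hv3 hcv
        have := le_mavScore_singleton D c hv
        rw [hvD, if_neg hcv, hv3] at this
        exact this
      rintro (i | j) _ hcp
      · exact haux _ _ (v1_mem_votes A Hf) hv1D v1_card (by simp)
      · have hj0 : j ≠ 0 := by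
          intro h
          exact hcp (by simp [p, h])
        have hj : j = 1 ∨ j = 2 ∨ j = 3 ∨ j = 4 := by omega
        rcases hj with rfl | rfl | rfl | rfl
        · refine haux _ _ (v2_mem_votes A Hf) hv2D v2_card ?_
          simp only [Finset.mem_insert, Finset.mem_singleton, Sum.inr.injEq]
          decide
        · refine haux _ _ (v2_mem_votes A Hf) hv2D v2_card ?_
          simp only [Finset.mem_insert, Finset.mem_singleton, Sum.inr.injEq]
          decide
        · refine haux _ _ (v1_mem_votes A Hf) hv1D v1_card ?_
          simp only [Finset.mem_insert, Finset.mem_singleton, Sum.inr.injEq]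
          decide
        · refine haux _ _ (v1_mem_votes A Hf) hv1D v1_card ?_
          simp only [Finset.mem_insert, Finset.mem_singleton, Sum.inr.injEq]
          decide
    have hwin : mavWins D ((votes A Hf).map (fun v => v ∩ D)) 1 {(p : Cand ι)} := by
      refine ⟨Finset.singleton_subset_iff.mpr hpD, Finset.card_singleton _, ?_⟩
      intro w' hw' hw'c
      obtain ⟨c, rfl⟩ := Finset.card_eq_one.mp hw'c
      by_cases hcp : c = p
      · subst hcp
        exact le_refl _
      · exact le_trans hp3 (le_trans (by omega)
          (hge4 c (Finset.singleton_subset_iff.mp hw') hcp))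
    refine ⟨C', ?_, ?_, hwin, ?_⟩
    · intro x hx
      obtain ⟨i, _, rfl⟩ := Finset.mem_image.mp hx
      refine Finset.mem_sdiff.mpr ⟨Finset.mem_univ _, ?_⟩
      simp [p]
    · rw [hC', Finset.card_image_of_injective _ Sum.inl_injective, hTκ]
    · intro w hw
      obtain ⟨c, rfl⟩ := Finset.card_eq_one.mp hw.2.1
      by_contra hcp
      have hcp' : c ≠ p := fun h => hcp (by rw [h])
      have h1 := hw.2.2 {(p : Cand ι)} (Finset.singleton_subset_iff.mpr hpD)
        (Finset.card_singleton _)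
      have h2 := hge4 c (Finset.singleton_subset_iff.mp hw.1) hcp'
      rw [← hD] at h1
      omega


end Stmt16
end
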